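/- arXiv:0711.1334 — 5 statements merged into one kernel-verified Lean document; each statement's English description precedes it below -/
import Mathlib

section
/- Let S be a symmetric positive definite n×n real matrix and A an m×n real matrix. Then A S Aᵀ = (I + A S Aᵀ) · A · (AᵀA + S⁻¹)⁻¹ · Aᵀ. -/
open Matrix

theorem stmt_1 {m n : ℕ} (S : Matrix (Fin n) (Fin n) ℝ) (A : Matrix (Fin m) (Fin n) ℝ)
    (hS : S.PosDef) (hSsym : Sᵀ = S) :
    A * S * Aᵀ = (1 + A * S * Aᵀ) * A * (Aᵀ * A + S⁻¹)⁻¹ * Aᵀ := by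
  have hSdet : IsUnit S.det := isUnit_iff_ne_zero.mpr hS.det_pos.ne'
  have hSinv : S * S⁻¹ = 1 := S.mul_nonsing_inv hSdet
  have hpsd : (Aᵀ * A).PosSemidef := by
    have := Matrix.posSemidef_conjTranspose_mul_self A
    simpa using this
  have hpd : (Aᵀ * A + S⁻¹).PosDef := by
    rw [add_comm]; exact hS.inv.add_posSemidef hpsd
  have hM : (Aᵀ * A + S⁻¹) * (Aᵀ * A + S⁻¹)⁻¹ = 1 :=
    (Aᵀ * A + S⁻¹).mul_nonsing_inv (isUnit_iff_ne_zero.mpr hpd.det_pos.ne')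
  have h1 : A * S * (Aᵀ * A + S⁻¹) = (1 + A * S * Aᵀ) * A := by
    rw [Matrix.mul_add, Matrix.mul_assoc A S S⁻¹, hSinv, Matrix.mul_one]
    rw [Matrix.add_mul, Matrix.one_mul, ← Matrix.mul_assoc (A*S) Aᵀ A, add_comm]
  calc A * S * Aᵀ = A * S * ((Aᵀ * A + S⁻¹) * (Aᵀ * A + S⁻¹)⁻¹) * Aᵀ := by
        rw [hM, Matrix.mul_one]
    _ = A * S * (Aᵀ * A + S⁻¹) * (Aᵀ * A + S⁻¹)⁻¹ * Aᵀ := by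
        simp only [Matrix.mul_assoc]
    _ = (1 + A * S * Aᵀ) * A * (Aᵀ * A + S⁻¹)⁻¹ * Aᵀ := by rw [h1]
end

section
/- Let A be a symmetric positive semidefinite n×n real matrix, q ∈ ℝⁿ, c ∈ ℝ. If the quadratic function f(x) = ⟨Ax, x⟩ - 2⟨q, x⟩ + c is bounded below on ℝⁿ, then q lies in the range of A, and the minimum of f equals c - ⟨A⁺q, q⟩, attained at x = A⁺q, where A⁺ denotes the Moore–Penrose pseudoinverse of A. -/
open Matrix

/-- `P` is the Moore–Penrose pseudoinverse of `M`. -/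
def IsMoorePenrose {m n : ℕ} (M : Matrix (Fin m) (Fin n) ℝ) (P : Matrix (Fin n) (Fin m) ℝ) : Prop :=
  M * P * M = M ∧ P * M * P = P ∧ (M * P)ᵀ = M * P ∧ (P * M)ᵀ = P * M

theorem stmt_3 {n : ℕ} (A : Matrix (Fin n) (Fin n) ℝ) (Ap : Matrix (Fin n) (Fin n) ℝ)
    (hA : A.PosSemidef) (hAp : IsMoorePenrose A Ap) (q : Fin n → ℝ) (c : ℝ)
    (f : (Fin n → ℝ) → ℝ)
    (hf : ∀ x, f x = (A *ᵥ x) ⬝ᵥ x - 2 * (q ⬝ᵥ x) + c)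
    (hbdd : BddBelow (Set.range f)) :
    q ∈ Set.range A.mulVec ∧
    (∀ x, f (Ap *ᵥ q) ≤ f x) ∧
    f (Ap *ᵥ q) = c - (Ap *ᵥ q) ⬝ᵥ q := by
  obtain ⟨hMPM, hPMP, hsymMP, hsymPM⟩ := hAp
  have hAT : Aᵀ = A := hA.1
  have hsym : ∀ x y : Fin n → ℝ, (A *ᵥ x) ⬝ᵥ y = (A *ᵥ y) ⬝ᵥ x := by
    intro x y
    rw [dotProduct_comm, dotProduct_mulVec, ← mulVec_transpose, hAT, dotProduct_comm,
      dotProduct_mulVec, ← mulVec_transpose, hAT, dotProduct_comm]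
  have hpsd : ∀ x : Fin n → ℝ, 0 ≤ (A *ᵥ x) ⬝ᵥ x := by
    intro x
    have := hA.dotProduct_mulVec_nonneg x
    simpa [dotProduct_comm] using this
  set x₀ := Ap *ᵥ q with hx₀
  set v := q - A *ᵥ x₀ with hv
  have hAAAp : A * (A * Ap) = A := by
    have h1 : (A * (A * Ap))ᵀ = A := by
      rw [transpose_mul, hsymMP, hAT]; exact hMPM
    rw [← transpose_transpose (A * (A * Ap)), h1, hAT]
  have hAAAp' : A * A * Ap = A := by rw [Matrix.mul_assoc]; exact hAAAp
  have hAv : A *ᵥ v = 0 := by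
    rw [hv, mulVec_sub, hx₀, mulVec_mulVec, mulVec_mulVec, hAAAp', sub_self]
  have hv0 : v = 0 := by
    by_contra hvne
    have hvv : 0 < v ⬝ᵥ v := by
      have h1 : v ⬝ᵥ v ≠ 0 := fun h => hvne (dotProduct_self_eq_zero.mp h)
      have h2 : 0 ≤ v ⬝ᵥ v := by
        rw [dotProduct]; exact Finset.sum_nonneg fun i _ => mul_self_nonneg _
      exact lt_of_le_of_ne h2 (Ne.symm h1)
    obtain ⟨b, hb⟩ := hbdd
    have hqv : q ⬝ᵥ v = (A *ᵥ x₀) ⬝ᵥ v + v ⬝ᵥ v := by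
      have : q = A *ᵥ x₀ + v := by rw [hv]; abel
      rw [this, add_dotProduct]
    have hx0v : (A *ᵥ x₀) ⬝ᵥ v = 0 := by
      rw [hsym, hAv, zero_dotProduct]
    set t : ℝ := (c - b + 1) / (2 * (v ⬝ᵥ v)) with ht
    have hft : f (t • v) = c - 2 * t * (v ⬝ᵥ v) := by
      rw [hf]
      simp [mulVec_smul, hAv, dotProduct_smul, smul_eq_mul, hqv, hx0v]
      ring
    have hle : b ≤ f (t • v) := hb ⟨t • v, rfl⟩
    rw [hft, ht] at hle
    have hkey : 2 * ((c - b + 1) / (2 * (v ⬝ᵥ v))) * (v ⬝ᵥ v) = c - b + 1 := by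
      field_simp
    linarith
  have hq : q = A *ᵥ x₀ := by
    have := hv0
    rw [hv, sub_eq_zero] at this
    exact this
  refine ⟨⟨x₀, hq.symm⟩, ?_, ?_⟩
  · intro x
    rw [hf, hf]
    have key : (A *ᵥ x) ⬝ᵥ x - 2 * (q ⬝ᵥ x) + c - ((A *ᵥ x₀) ⬝ᵥ x₀ - 2 * (q ⬝ᵥ x₀) + c)
        = (A *ᵥ (x - x₀)) ⬝ᵥ (x - x₀) := by
      rw [mulVec_sub, sub_dotProduct, dotProduct_sub, dotProduct_sub]
      rw [hsym x₀ x]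
      rw [hq]
      rw [hsym x₀ x]
      ring
    have := hpsd (x - x₀)
    linarith [key ▸ this]
  · rw [hf]
    have h1 : (A *ᵥ x₀) ⬝ᵥ x₀ = q ⬝ᵥ x₀ := by rw [← hq]
    rw [h1, dotProduct_comm]
    ring
end

section
/- Let A be a symmetric positive semidefinite n×n real matrix with Moore–Penrose pseudoinverse A⁺, and let β ≥ 0. For the set G = {x ∈ ℝⁿ : ⟨Ax, x⟩ ≤ β}, the support function satisfies: s(ℓ | G) = √β · ⟨A⁺ℓ, ℓ⟩^{1/2} if A⁺Aℓ = ℓ, and s(ℓ | G) = +∞ otherwise. -/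
open Matrix

lemma mp_unique {n : ℕ} {M P Q : Matrix (Fin n) (Fin n) ℝ}
    (hP : IsMoorePenrose M P) (hQ : IsMoorePenrose M Q) : P = Q := by
  obtain ⟨hP1, hP2, hP3, hP4⟩ := hP
  obtain ⟨hQ1, hQ2, hQ3, hQ4⟩ := hQ
  have h5 : M * Q * (M * P) = M * P := by
    rw [← mul_assoc, hQ1]
  have h6 : Q * M * (P * M) = Q * M := by
    have : Q * M * (P * M) = Q * (M * P * M) := by simp only [mul_assoc]
    rw [this, hP1]
  have h1 : P = P * (M * Q) := by
    calc P = P * M * P := hP2.symm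
      _ = P * (M * P) := by rw [mul_assoc]
      _ = P * (M * P)ᵀ := by rw [hP3]
      _ = P * (M * Q * (M * P))ᵀ := by rw [h5]
      _ = P * ((M * P)ᵀ * (M * Q)ᵀ) := by rw [transpose_mul]
      _ = P * ((M * P) * (M * Q)) := by rw [hP3, hQ3]
      _ = P * M * P * (M * Q) := by simp only [mul_assoc]
      _ = P * (M * Q) := by rw [hP2]
  have h2 : Q = P * (M * Q) := by
    calc Q = Q * M * Q := hQ2.symm
      _ = (Q * M)ᵀ * Q := by rw [hQ4]
      _ = (Q * M * (P * M))ᵀ * Q := by rw [h6]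
      _ = ((P * M)ᵀ * (Q * M)ᵀ) * Q := by rw [transpose_mul]
      _ = ((P * M) * (Q * M)) * Q := by rw [hP4, hQ4]
      _ = P * M * (Q * M * Q) := by simp only [mul_assoc]
      _ = P * (M * Q) := by rw [hQ2, mul_assoc]
  rw [h1, ← h2]

theorem stmt_4 {n : ℕ} (A Ap : Matrix (Fin n) (Fin n) ℝ)
    (hA : A.PosSemidef) (hAp : IsMoorePenrose A Ap) (β : ℝ) (hβ : 0 ≤ β)
    (ℓ : Fin n → ℝ) (G : Set (Fin n → ℝ))
    (hG : G = {x | (A *ᵥ x) ⬝ᵥ x ≤ β}) :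
    ((Ap *ᵥ (A *ᵥ ℓ)) = ℓ →
      (⨆ x ∈ G, ((ℓ ⬝ᵥ x : ℝ) : EReal)) =
        ((Real.sqrt β * Real.sqrt ((Ap *ᵥ ℓ) ⬝ᵥ ℓ) : ℝ) : EReal)) ∧
    ((Ap *ᵥ (A *ᵥ ℓ)) ≠ ℓ →
      (⨆ x ∈ G, ((ℓ ⬝ᵥ x : ℝ) : EReal)) = ⊤) := by
  subst hG
  -- basic facts
  have hAt : Aᵀ = A := by
    have h := hA.1
    ext i j
    have := congrFun (congrFun h i) j
    simpa using this
  have hPos : ∀ x, 0 ≤ (A *ᵥ x) ⬝ᵥ x := by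
    intro x
    have := hA.dotProduct_mulVec_nonneg x
    simpa [dotProduct_comm] using this
  have hsym : ∀ x z : Fin n → ℝ, (A *ᵥ x) ⬝ᵥ z = (A *ᵥ z) ⬝ᵥ x := by
    intro x z
    rw [dotProduct_comm, dotProduct_mulVec,
      show z ᵥ* A = A *ᵥ z by rw [← hAt, vecMul_transpose, hAt]]
  -- Ap is symmetric
  have hApt : Apᵀ = Ap := by
    obtain ⟨h1, h2, h3, h4⟩ := hAp
    refine mp_unique ?_ ⟨h1, h2, h3, h4⟩
    refine ⟨?_, ?_, ?_, ?_⟩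
    · have := congrArg transpose h1
      calc A * Apᵀ * A = (A * Ap * A)ᵀ := by
            simp only [transpose_mul, hAt, mul_assoc]
        _ = A := by rw [h1, hAt]
    · have := congrArg transpose h2
      calc Apᵀ * A * Apᵀ = (Ap * A * Ap)ᵀ := by
            simp only [transpose_mul, hAt, mul_assoc]
        _ = Apᵀ := by rw [h2]
    · calc (A * Apᵀ)ᵀ = Ap * A := by rw [transpose_mul, transpose_transpose, hAt]
        _ = (Ap * A)ᵀ := h4.symm
        _ = A * Apᵀ := by rw [transpose_mul, hAt]
    · calc (Apᵀ * A)ᵀ = A * Ap := by rw [transpose_mul, transpose_transpose, hAt]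
        _ = (A * Ap)ᵀ := h3.symm
        _ = Apᵀ * A := by rw [transpose_mul, hAt]
  have hcomm : A * Ap = Ap * A := by
    calc A * Ap = (A * Ap)ᵀ := hAp.2.2.1.symm
      _ = Apᵀ * Aᵀ := transpose_mul _ _
      _ = Ap * A := by rw [hApt, hAt]
  -- Cauchy–Schwarz for the PSD form
  have hCS : ∀ x z : Fin n → ℝ,
      ((A *ᵥ z) ⬝ᵥ x) ^ 2 ≤ ((A *ᵥ z) ⬝ᵥ z) * ((A *ᵥ x) ⬝ᵥ x) := by
    intro x z
    have hq : ∀ t : ℝ, 0 ≤ ((A *ᵥ z) ⬝ᵥ z) * (t * t) + (2 * ((A *ᵥ z) ⬝ᵥ x)) * t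
        + ((A *ᵥ x) ⬝ᵥ x) := by
      intro t
      have h0 := hPos (x + t • z)
      simp only [mulVec_add, mulVec_smul, add_dotProduct, dotProduct_add,
        smul_dotProduct, dotProduct_smul, smul_eq_mul] at h0
      rw [hsym x z] at h0
      ring_nf at h0 ⊢
      linarith
    have hd := discrim_le_zero hq
    rw [discrim] at hd
    nlinarith [hd]
  constructor
  · -- ℓ in range case
    intro hℓ
    set y : Fin n → ℝ := Ap *ᵥ ℓ with hy
    set q : ℝ := (Ap *ᵥ ℓ) ⬝ᵥ ℓ with hqdef
    have hAy : A *ᵥ y = ℓ := by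
      rw [hy, mulVec_mulVec, hcomm, ← mulVec_mulVec, hℓ]
    have hqy : (A *ᵥ y) ⬝ᵥ y = q := by
      rw [hAy, hqdef, dotProduct_comm]
    have hq0 : 0 ≤ q := hqy ▸ hPos y
    have hub : ∀ x, (A *ᵥ x) ⬝ᵥ x ≤ β → ℓ ⬝ᵥ x ≤ Real.sqrt β * Real.sqrt q := by
      intro x hx
      have h1 : ((A *ᵥ y) ⬝ᵥ x) ^ 2 ≤ q * β := by
        have := hCS x y
        rw [hqy] at this
        nlinarith [mul_le_mul_of_nonneg_left hx hq0]
      have h2 : (A *ᵥ y) ⬝ᵥ x ≤ Real.sqrt (q * β) := by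
        calc (A *ᵥ y) ⬝ᵥ x ≤ |(A *ᵥ y) ⬝ᵥ x| := le_abs_self _
          _ = Real.sqrt (((A *ᵥ y) ⬝ᵥ x) ^ 2) := (Real.sqrt_sq_eq_abs _).symm
          _ ≤ Real.sqrt (q * β) := Real.sqrt_le_sqrt h1
      rw [← hAy]
      calc (A *ᵥ y) ⬝ᵥ x ≤ Real.sqrt (q * β) := h2
        _ = Real.sqrt β * Real.sqrt q := by
            rw [Real.sqrt_mul hq0, mul_comm]
    apply le_antisymm
    · exact iSup₂_le fun x hx => by exact_mod_cast hub x hx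
    · rcases eq_or_lt_of_le hq0 with hq | hq
      · -- q = 0 : value is 0, witness 0
        have hv : Real.sqrt β * Real.sqrt q = 0 := by
          rw [← hq, Real.sqrt_zero, mul_zero]
        rw [hv]
        have h0mem : (A *ᵥ (0 : Fin n → ℝ)) ⬝ᵥ (0 : Fin n → ℝ) ≤ β := by
          simp [hβ]
        calc ((0 : ℝ) : EReal) = ((ℓ ⬝ᵥ (0 : Fin n → ℝ) : ℝ) : EReal) := by simp
          _ ≤ _ := le_iSup₂ (f := fun x (_ : x ∈ {x | (A *ᵥ x) ⬝ᵥ x ≤ β}) =>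
              ((ℓ ⬝ᵥ x : ℝ) : EReal)) 0 h0mem
      · -- q > 0 : witness (√β/√q) • y
        set t : ℝ := Real.sqrt β / Real.sqrt q with ht
        have hsq : Real.sqrt q ≠ 0 := by positivity
        have hmem : (A *ᵥ (t • y)) ⬝ᵥ (t • y) ≤ β := by
          rw [mulVec_smul, smul_dotProduct, dotProduct_smul, hqy, smul_eq_mul, smul_eq_mul]
          have : t * (t * q) = β := by
            rw [ht]
            field_simp
            linear_combination q * Real.mul_self_sqrt hβ - β * Real.sq_sqrt hq0
          rw [this]
        have hval : ℓ ⬝ᵥ (t • y) = Real.sqrt β * Real.sqrt q := by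
          rw [dotProduct_smul, smul_eq_mul]
          have hly : ℓ ⬝ᵥ y = q := by rw [hqdef, dotProduct_comm]
          rw [hly, ht, div_mul_eq_mul_div, mul_div_assoc, Real.div_sqrt]
        calc ((Real.sqrt β * Real.sqrt q : ℝ) : EReal)
            = ((ℓ ⬝ᵥ (t • y) : ℝ) : EReal) := by rw [hval]
          _ ≤ _ := le_iSup₂ (f := fun x (_ : x ∈ {x | (A *ᵥ x) ⬝ᵥ x ≤ β}) =>
              ((ℓ ⬝ᵥ x : ℝ) : EReal)) (t • y) hmem
  · -- ℓ not in range case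
    intro hne
    set d : Fin n → ℝ := ℓ - Ap *ᵥ (A *ᵥ ℓ) with hd
    have hd0 : d ≠ 0 := sub_ne_zero.mpr (Ne.symm hne)
    have hAd : A *ᵥ d = 0 := by
      rw [hd, mulVec_sub, mulVec_mulVec, mulVec_mulVec, hAp.1, sub_self]
    have hpd : (Ap *ᵥ (A *ᵥ ℓ)) ⬝ᵥ d = 0 := by
      rw [dotProduct_comm, mulVec_mulVec, dotProduct_mulVec,
        show d ᵥ* (Ap * A) = (Ap * A) *ᵥ d by
          rw [← hAp.2.2.2, vecMul_transpose, hAp.2.2.2],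
        ← mulVec_mulVec, hAd, mulVec_zero, zero_dotProduct]
    have hc : 0 < ℓ ⬝ᵥ d := by
      have h1 : ℓ ⬝ᵥ d = d ⬝ᵥ d := by
        have : ℓ = d + Ap *ᵥ (A *ᵥ ℓ) := by rw [hd]; ring
        rw [this, add_dotProduct, hpd, add_zero]
      rw [h1]
      have hdd : 0 ≤ d ⬝ᵥ d := by simpa using dotProduct_self_star_nonneg d
      rcases hdd.lt_or_eq with h | h
      · exact h
      · exact absurd (dotProduct_self_eq_zero.mp h.symm) hd0
    rw [EReal.eq_top_iff_forall_lt]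
    intro r
    set t : ℝ := (r + 1) / (ℓ ⬝ᵥ d) with htd
    have hmem : (A *ᵥ (t • d)) ⬝ᵥ (t • d) ≤ β := by
      rw [mulVec_smul, hAd, smul_zero, zero_dotProduct]
      exact hβ
    have hval : ℓ ⬝ᵥ (t • d) = r + 1 := by
      rw [dotProduct_smul, smul_eq_mul, htd, div_mul_cancel₀]
      exact ne_of_gt hc
    calc (r : EReal) < ((r + 1 : ℝ) : EReal) := by exact_mod_cast (by linarith : r < r + 1)
      _ = ((ℓ ⬝ᵥ (t • d) : ℝ) : EReal) := by rw [hval]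
      _ ≤ _ := le_iSup₂ (f := fun x (_ : x ∈ {x | (A *ᵥ x) ⬝ᵥ x ≤ β}) =>
          ((ℓ ⬝ᵥ x : ℝ) : EReal)) (t • d) hmem
end

section
/- Let A be a symmetric positive semidefinite n×n real matrix and ℓ ∈ ℝⁿ. Then sup_{x : ⟨Ax,x⟩ ≤ β} |⟨ℓ, x⟩| is finite for some (equivalently all) β > 0 if and only if ℓ belongs to the range of A. -/
open Matrix RealInnerProductSpace

lemma key {n : ℕ} (A : Matrix (Fin n) (Fin n) ℝ) (hA : A.IsHermitian)
    (ℓ : Fin n → ℝ) (h : ∀ v, A *ᵥ v = 0 → ℓ ⬝ᵥ v = 0) :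
    ℓ ∈ Set.range A.mulVec := by
  set T := A.toEuclideanLin with hT
  have hsym : T.IsSymmetric := Matrix.isHermitian_iff_isSymmetric.mp hA
  set K : Submodule ℝ (EuclideanSpace ℝ (Fin n)) := LinearMap.range T with hK
  have hℓ : (WithLp.equiv 2 (Fin n → ℝ)).symm ℓ ∈ K := by
    rw [← Submodule.orthogonal_orthogonal K]
    intro v hv
    have h2 : ∀ x, ⟪T x, v⟫ = 0 := fun x =>
      (Submodule.mem_orthogonal K v).mp hv _ (LinearMap.mem_range_self T x)
    have h1 : T v = 0 := by
      have h3 : ⟪T v, T v⟫ = 0 := by rw [← hsym (T v) v]; exact h2 (T v)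
      exact inner_self_eq_zero.mp h3
    have hv0 : A *ᵥ (WithLp.equiv 2 (Fin n → ℝ)) v = 0 := by
      have := congrArg (WithLp.equiv 2 (Fin n → ℝ)) h1
      simpa [hT, Matrix.toEuclideanLin_apply] using this
    have hlv := h _ hv0
    rw [real_inner_comm]
    simpa [PiLp.inner_apply, dotProduct, mul_comm] using hlv
  obtain ⟨y, hy⟩ := hℓ
  refine ⟨(WithLp.equiv 2 (Fin n → ℝ)) y, ?_⟩
  have := congrArg (WithLp.equiv 2 (Fin n → ℝ)) hy
  simpa [hT, Matrix.toEuclideanLin_apply] using this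

lemma symm_form {n : ℕ} {A : Matrix (Fin n) (Fin n) ℝ} (hA : A.IsHermitian)
    (x y : Fin n → ℝ) : (A *ᵥ x) ⬝ᵥ y = (A *ᵥ y) ⬝ᵥ x := by
  rw [dotProduct_comm, Matrix.dotProduct_mulVec, ← Matrix.mulVec_transpose]
  have : Aᵀ = A := by simpa [Matrix.IsHermitian, Matrix.conjTranspose_eq_transpose_of_trivial] using hA
  rw [this]

lemma cs {n : ℕ} {A : Matrix (Fin n) (Fin n) ℝ} (hA : A.PosSemidef)
    (x y : Fin n → ℝ) :
    ((A *ᵥ y) ⬝ᵥ x) ^ 2 ≤ ((A *ᵥ y) ⬝ᵥ y) * ((A *ᵥ x) ⬝ᵥ x) := by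
  have hpos : ∀ t : ℝ, 0 ≤ ((A *ᵥ y) ⬝ᵥ y) * (t * t) + (2 * ((A *ᵥ y) ⬝ᵥ x)) * t
      + ((A *ᵥ x) ⬝ᵥ x) := by
    intro t
    have h0 : 0 ≤ (A *ᵥ (x + t • y)) ⬝ᵥ (x + t • y) := by
      have := hA.dotProduct_mulVec_nonneg (x + t • y)
      simpa [dotProduct_comm] using this
    have hexp : (A *ᵥ (x + t • y)) ⬝ᵥ (x + t • y)
        = ((A *ᵥ y) ⬝ᵥ y) * (t * t) + (2 * ((A *ᵥ y) ⬝ᵥ x)) * t + ((A *ᵥ x) ⬝ᵥ x) := by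
      rw [Matrix.mulVec_add, Matrix.mulVec_smul, add_dotProduct, smul_dotProduct,
        dotProduct_add, dotProduct_smul, dotProduct_add, dotProduct_smul,
        symm_form hA.1 x y]
      simp [smul_eq_mul]; ring
    linarith [hexp ▸ h0]
  have hd := discrim_le_zero hpos
  simp only [discrim] at hd
  nlinarith [hd]

theorem stmt_5 {n : ℕ} (A : Matrix (Fin n) (Fin n) ℝ) (hA : A.PosSemidef)
    (ℓ : Fin n → ℝ) :
    ((∃ β > (0 : ℝ), BddAbove ((fun x => |ℓ ⬝ᵥ x|) '' {x | (A *ᵥ x) ⬝ᵥ x ≤ β})) ↔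
        ℓ ∈ Set.range A.mulVec) ∧
    ((∀ β > (0 : ℝ), BddAbove ((fun x => |ℓ ⬝ᵥ x|) '' {x | (A *ᵥ x) ⬝ᵥ x ≤ β})) ↔
        ℓ ∈ Set.range A.mulVec) := by
  have hbdd : ℓ ∈ Set.range A.mulVec →
      ∀ β > (0 : ℝ), BddAbove ((fun x => |ℓ ⬝ᵥ x|) '' {x | (A *ᵥ x) ⬝ᵥ x ≤ β}) := by
    rintro ⟨y, rfl⟩ β hβ
    refine ⟨Real.sqrt (((A *ᵥ y) ⬝ᵥ y) * β), ?_⟩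
    rintro m ⟨x, hx, rfl⟩
    have h1 : ((A *ᵥ y) ⬝ᵥ x) ^ 2 ≤ ((A *ᵥ y) ⬝ᵥ y) * β := by
      have hcs := cs hA x y
      have hy0 : 0 ≤ (A *ᵥ y) ⬝ᵥ y := by
        have := hA.dotProduct_mulVec_nonneg y; simpa [dotProduct_comm] using this
      have hx' : (A *ᵥ x) ⬝ᵥ x ≤ β := hx
      nlinarith [mul_le_mul_of_nonneg_left hx' hy0]
    calc |(A *ᵥ y) ⬝ᵥ x| = Real.sqrt (((A *ᵥ y) ⬝ᵥ x) ^ 2) := (Real.sqrt_sq_eq_abs _).symm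
      _ ≤ Real.sqrt (((A *ᵥ y) ⬝ᵥ y) * β) := Real.sqrt_le_sqrt h1
  have hunbdd : ℓ ∉ Set.range A.mulVec →
      ∀ β > (0 : ℝ), ¬ BddAbove ((fun x => |ℓ ⬝ᵥ x|) '' {x | (A *ᵥ x) ⬝ᵥ x ≤ β}) := by
    intro hr β hβ hb
    obtain ⟨v, hv0, hvne⟩ : ∃ v, A *ᵥ v = 0 ∧ ℓ ⬝ᵥ v ≠ 0 := by
      by_contra hc
      push_neg at hc
      exact hr (key A hA.1 ℓ hc)
    obtain ⟨M, hM⟩ := hb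
    set t : ℝ := (|M| + 1) / |ℓ ⬝ᵥ v| with ht
    have hmem : t • v ∈ {x | (A *ᵥ x) ⬝ᵥ x ≤ β} := by
      simp [Matrix.mulVec_smul, hv0, le_of_lt hβ]
    have hle := hM (Set.mem_image_of_mem _ hmem)
    have habs : |ℓ ⬝ᵥ (t • v)| = |M| + 1 := by
      rw [dotProduct_smul, smul_eq_mul, abs_mul]
      have hc : |ℓ ⬝ᵥ v| ≠ 0 := abs_ne_zero.mpr hvne
      have hpos : (0:ℝ) < |ℓ ⬝ᵥ v| := (abs_nonneg _).lt_of_ne' hc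
      have habs_t : |t| = t := abs_of_nonneg (by positivity)
      rw [habs_t, ht, div_mul_cancel₀ _ hc]
    rw [habs] at hle
    have : M ≤ |M| := le_abs_self M
    linarith
  constructor
  · constructor
    · rintro ⟨β, hβ, hb⟩
      by_contra hr
      exact hunbdd hr β hβ hb
    · intro hr; exact ⟨1, one_pos, hbdd hr 1 one_pos⟩
  · constructor
    · intro hall
      by_contra hr
      exact hunbdd hr 1 one_pos (hall 1 one_pos)
    · exact hbdd
end

section
/- Let F₀, C₀, F₁ be real matrices (F₀, F₁ of size m×n, C₀ of size m×n), H₀, H₁ of size p×n, and suppose the stacked matrix [F₁; H₁] has rank n and [F₀; H₀] has rank n. Define Q₀ = F₀ᵀF₀ + H₀ᵀH₀ and Q₁ = H₁ᵀH₁ + F₁ᵀ(I - C₀(Q₀ + C₀ᵀC₀)⁻¹C₀ᵀ)F₁. Then Q₁ is symmetric positive definite and Q₁⁻¹ = (F₁ᵀ(I + C₀Q₀⁻¹C₀ᵀ)⁻¹F₁ + H₁ᵀH₁)⁻¹. -/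
open Matrix

private lemma ct_eq_t {a b : ℕ} (M : Matrix (Fin a) (Fin b) ℝ) : Mᴴ = Mᵀ := by
  ext i j; simp [conjTranspose_apply]

private lemma mulVec_inj_of_rank {K : Type*} [Fintype K] {n : ℕ}
    (A : Matrix K (Fin n) ℝ) (hr : A.rank = n) :
    ∀ x : Fin n → ℝ, A *ᵥ x = 0 → x = 0 := by
  have h := LinearMap.finrank_range_add_finrank_ker A.mulVecLin
  rw [Module.finrank_pi, Fintype.card_fin] at h
  rw [Matrix.rank] at hr
  have hker : Module.finrank ℝ (LinearMap.ker A.mulVecLin) = 0 := by omega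
  have hbot : LinearMap.ker A.mulVecLin = ⊥ := Submodule.finrank_eq_zero.mp hker
  intro x hx
  have : x ∈ LinearMap.ker A.mulVecLin := by
    simpa [LinearMap.mem_ker, Matrix.mulVecLin_apply] using hx
  simpa [hbot] using this

private lemma dp_self_nonneg {k : ℕ} (v : Fin k → ℝ) : 0 ≤ v ⬝ᵥ v :=
  Finset.sum_nonneg fun i _ => mul_self_nonneg _

private lemma dp_self_pos {k : ℕ} {v : Fin k → ℝ} (hv : v ≠ 0) : 0 < v ⬝ᵥ v :=
  lt_of_le_of_ne (dp_self_nonneg v) fun h => hv (dotProduct_self_eq_zero.mp h.symm)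

private lemma stack_posDef {m p n : ℕ} {S : Matrix (Fin m) (Fin m) ℝ} (hS : S.PosDef)
    (F : Matrix (Fin m) (Fin n) ℝ) (H : Matrix (Fin p) (Fin n) ℝ)
    (hr : (Matrix.fromRows F H).rank = n) :
    (Hᵀ * H + Fᵀ * S * F).PosDef := by
  have hinj := mulVec_inj_of_rank _ hr
  rw [posDef_iff_dotProduct_mulVec]
  constructor
  · have h1 : (Hᵀ * H).IsHermitian := by
      have := isHermitian_conjTranspose_mul_self H
      rwa [ct_eq_t] at this
    have h2 : (Fᵀ * S * F).IsHermitian := by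
      have := isHermitian_conjTranspose_mul_mul F hS.isHermitian
      rwa [ct_eq_t] at this
    exact h1.add h2
  · intro x hx
    have hnot : ¬(F *ᵥ x = 0 ∧ H *ᵥ x = 0) := by
      rintro ⟨h1, h2⟩
      apply hx
      apply hinj
      rw [fromRows_mulVec, h1, h2]
      ext i; cases i <;> simp
    have hstar : star x = x := by ext i; simp
    have e1 : star x ⬝ᵥ ((Hᵀ * H) *ᵥ x) = (H *ᵥ x) ⬝ᵥ (H *ᵥ x) := by
      rw [hstar, ← mulVec_mulVec, dotProduct_mulVec, vecMul_transpose]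
    have e2 : star x ⬝ᵥ ((Fᵀ * S * F) *ᵥ x) = (F *ᵥ x) ⬝ᵥ (S *ᵥ (F *ᵥ x)) := by
      rw [hstar, Matrix.mul_assoc, ← mulVec_mulVec, dotProduct_mulVec, vecMul_transpose,
        mulVec_mulVec]
    rw [add_mulVec, dotProduct_add, e1, e2]
    by_cases hF : F *ᵥ x = 0
    · have hH : H *ᵥ x ≠ 0 := fun h => hnot ⟨hF, h⟩
      rw [hF]
      simpa using dp_self_pos hH
    · have hpos : 0 < (F *ᵥ x) ⬝ᵥ (S *ᵥ (F *ᵥ x)) := by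
        have := hS.dotProduct_mulVec_pos hF
        have hst : star (F *ᵥ x) = F *ᵥ x := by ext i; simp
        rwa [hst] at this
      exact add_pos_of_nonneg_of_pos (dp_self_nonneg _) hpos

theorem stmt_14 {m n p : ℕ} (F₀ C₀ F₁ : Matrix (Fin m) (Fin n) ℝ)
    (H₀ H₁ : Matrix (Fin p) (Fin n) ℝ)
    (hr₀ : (Matrix.fromRows F₀ H₀).rank = n)
    (hr₁ : (Matrix.fromRows F₁ H₁).rank = n)
    (Q₀ Q₁ : Matrix (Fin n) (Fin n) ℝ)
    (hQ₀ : Q₀ = F₀ᵀ * F₀ + H₀ᵀ * H₀)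
    (hQ₁ : Q₁ = H₁ᵀ * H₁ + F₁ᵀ * (1 - C₀ * (Q₀ + C₀ᵀ * C₀)⁻¹ * C₀ᵀ) * F₁) :
    Q₁.PosDef ∧ Q₁⁻¹ = (F₁ᵀ * (1 + C₀ * Q₀⁻¹ * C₀ᵀ)⁻¹ * F₁ + H₁ᵀ * H₁)⁻¹ := by
  -- Q₀ is positive definite
  have hQ₀pos : Q₀.PosDef := by
    have := stack_posDef (Matrix.PosDef.one (n := Fin m) (R := ℝ)) F₀ H₀ hr₀
    rw [Matrix.mul_one, add_comm] at this
    rwa [hQ₀]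
  have hQ₀unit : IsUnit Q₀.det := isUnit_iff_ne_zero.mpr hQ₀pos.det_pos.ne'
  -- A := Q₀ + C₀ᵀC₀ is positive definite
  set A := Q₀ + C₀ᵀ * C₀ with hAdef
  have hApos : A.PosDef := by
    apply hQ₀pos.add_posSemidef
    have := posSemidef_conjTranspose_mul_self C₀
    rwa [ct_eq_t] at this
  have hAunit : IsUnit A.det := isUnit_iff_ne_zero.mpr hApos.det_pos.ne'
  -- B := 1 + C₀Q₀⁻¹C₀ᵀ is positive definite
  set B := 1 + C₀ * Q₀⁻¹ * C₀ᵀ with hBdef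
  have hBpos : B.PosDef := by
    rw [hBdef]
    apply (Matrix.PosDef.one (n := Fin m) (R := ℝ)).add_posSemidef
    have := hQ₀pos.inv.posSemidef.mul_mul_conjTranspose_same C₀
    rwa [ct_eq_t] at this
  -- key identity: (1 - C₀A⁻¹C₀ᵀ) * B = 1
  have h1 : A⁻¹ * (Q₀ + C₀ᵀ * C₀) = 1 := by rw [← hAdef]; exact nonsing_inv_mul A hAunit
  have h2 : A⁻¹ + A⁻¹ * (C₀ᵀ * C₀) * Q₀⁻¹ = Q₀⁻¹ := by
    have hq : Q₀ * Q₀⁻¹ = 1 := mul_nonsing_inv Q₀ hQ₀unit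
    calc A⁻¹ + A⁻¹ * (C₀ᵀ * C₀) * Q₀⁻¹
        = A⁻¹ * (Q₀ * Q₀⁻¹) + A⁻¹ * (C₀ᵀ * C₀) * Q₀⁻¹ := by rw [hq, mul_one]
      _ = A⁻¹ * (Q₀ + C₀ᵀ * C₀) * Q₀⁻¹ := by noncomm_ring
      _ = Q₀⁻¹ := by rw [h1, one_mul]
  have h3 : Q₀⁻¹ - A⁻¹ - A⁻¹ * (C₀ᵀ * C₀) * Q₀⁻¹ = 0 := by
    rw [sub_sub, sub_eq_zero]; exact h2.symm
  have hkey : (1 - C₀ * A⁻¹ * C₀ᵀ) * B = 1 := by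
    calc (1 - C₀ * A⁻¹ * C₀ᵀ) * B
        = 1 + C₀ * (Q₀⁻¹ - A⁻¹ - A⁻¹ * (C₀ᵀ * C₀) * Q₀⁻¹) * C₀ᵀ := by
          rw [hBdef]
          simp only [Matrix.mul_sub, Matrix.sub_mul, Matrix.mul_add, Matrix.add_mul,
            Matrix.mul_one, Matrix.one_mul, Matrix.mul_assoc]
          abel
      _ = 1 := by rw [h3]; simp
  have hSB : 1 - C₀ * A⁻¹ * C₀ᵀ = B⁻¹ := (inv_eq_left_inv hkey).symm
  -- conclude
  have hQ₁' : Q₁ = H₁ᵀ * H₁ + F₁ᵀ * B⁻¹ * F₁ := by rw [hQ₁, ← hSB, hAdef]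
  constructor
  · rw [hQ₁']
    exact stack_posDef hBpos.inv F₁ H₁ hr₁
  · rw [hQ₁', add_comm (H₁ᵀ * H₁)]
end
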